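/- Composition in Gen is associative: for arrows R₁ : n → m, R₂ : m → k, R₃ : k → l, (R₃ ∗ R₂) ∗ R₁ = R₃ ∗ (R₂ ∗ R₁). -/

import Mathlib

/-- `R` is an equivalence relation on the finite ordinal `N` (as a subset of ℕ). -/
def IsEquivOn (R : ℕ → ℕ → Prop) (N : ℕ) : Prop :=
  (∀ x y, R x y → x < N ∧ y < N) ∧ (∀ x, x < N → R x x) ∧
    (∀ x y, R x y → R y x) ∧ (∀ x y z, R x y → R y z → R x z)

/-- The relation `R⁺ᵏ`: shift `R` upwards by `k`. -/
def shiftRel (R : ℕ → ℕ → Prop) (k : ℕ) : ℕ → ℕ → Prop :=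
  fun x y => k ≤ x ∧ k ≤ y ∧ R (x - k) (y - k)

/-- Transitive closure of `R₁ ∪ R₂⁺ⁿ`. -/
def glueRel (n : ℕ) (R₁ R₂ : ℕ → ℕ → Prop) : ℕ → ℕ → Prop :=
  Relation.TransGen (fun a b => R₁ a b ∨ shiftRel R₂ n a b)

/-- Renumbering of the outer blocks `n ∪ kⁿ⁺ᵐ` into `n + k`. -/
def embOuter (n m : ℕ) (x : ℕ) : ℕ := if x < n then x else x + m

/-- Composition `R₂ ∗ R₁` in the category Gen: restrict the transitive closure
of `R₁ ∪ R₂⁺ⁿ` to the outer blocks and renumber. -/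
def genComp (n m k : ℕ) (R₂ R₁ : ℕ → ℕ → Prop) : ℕ → ℕ → Prop :=
  fun x y => x < n + k ∧ y < n + k ∧
    glueRel n R₁ R₂ (embOuter n m x) (embOuter n m y)

/-- The identity arrow `1ₙ` of Gen: `x` and `y` are related iff `x ≡ y (mod n)`. -/
def genId (n : ℕ) : ℕ → ℕ → Prop :=
  fun x y => x < n + n ∧ y < n + n ∧ x % n = y % n

/-!
Both composites are the restriction to the outer blocks of one relation, the transitive
closure of `R₁ ∪ R₂⁺ⁿ ∪ R₃⁺ⁿ⁺ᵐ` (`glueRel₃`). Passing from that closure to a composite hides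
one inner block. A path in the closure is cut at its visits to the visible points: since the
relation that is not being composed never touches the hidden block, the path becomes a chain of
its steps and of runs that form steps of the inner composite. The ranges of `R₁` and `R₂` keep
those runs inside the domain of the inner composite.
-/

open Relation Function Set

section TransGen

variable {α β : Type*}

theorem Relation.TransGen.and_of_forall {r : α → α → Prop} {p : α → Prop}
    (h : ∀ a b, r a b → p a ∧ p b) {a b : α} (hab : TransGen r a b) : p a ∧ p b := by
  induction hab with
  | single hab => exact h _ _ hab
  | tail _ hbc ih => exact ⟨ih.1, (h _ _ hbc).2⟩

/-- Cut a path of `r`- and `s`-steps at its visits to `S`: when every `s`-step lies in `S`,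
the path is a chain of `s`-steps and of `r`-runs between points of `S`. -/
theorem Relation.TransGen.or_restrict {r s : α → α → Prop} {S : Set α}
    (hs : ∀ a b, s a b → a ∈ S ∧ b ∈ S) {x y : α} (hx : x ∈ S) (hy : y ∈ S)
    (h : TransGen (fun a b => r a b ∨ s a b) x y) :
    TransGen (fun a b => (a ∈ S ∧ b ∈ S ∧ TransGen r a b) ∨ s a b) x y := by
  set d : α → α → Prop := fun a b => (a ∈ S ∧ b ∈ S ∧ TransGen r a b) ∨ s a b
  suffices key : ∀ z, TransGen (fun a b => r a b ∨ s a b) x z →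
      (z ∈ S ∧ TransGen d x z) ∨ ∃ w ∈ S, ReflTransGen d x w ∧ TransGen r w z by
    rcases key y h with ⟨-, hxy⟩ | ⟨w, hw, hxw, hwy⟩
    · exact hxy
    · exact TransGen.tail' hxw (Or.inl ⟨hw, hy, hwy⟩)
  intro z hxz
  induction hxz with
  | single hr =>
    rcases hr with hr | hs'
    · exact Or.inr ⟨x, hx, .refl, .single hr⟩
    · exact Or.inl ⟨(hs _ _ hs').2, .single (Or.inr hs')⟩
  | @tail b c _ hbc ih =>
    rcases hbc with hr | hs'
    · rcases ih with ⟨hb, hxb⟩ | ⟨w, hw, hxw, hwb⟩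
      · exact Or.inr ⟨b, hb, hxb.to_reflTransGen, .single hr⟩
      · exact Or.inr ⟨w, hw, hxw, hwb.tail hr⟩
    · refine Or.inl ⟨(hs _ _ hs').2, ?_⟩
      rcases ih with ⟨-, hxb⟩ | ⟨w, hw, hxw, hwb⟩
      · exact hxb.tail (Or.inr hs')
      · exact (TransGen.tail' hxw (Or.inl ⟨hw, (hs _ _ hs').1, hwb⟩)).tail (Or.inr hs')

theorem Relation.TransGen.comap_of_mem_range {r : β → β → Prop} {f : α → β}
    (hr : ∀ c d, r c d → c ∈ range f) {a b : α} (h : TransGen r (f a) (f b)) :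
    TransGen (fun x y => r (f x) (f y)) a b := by
  suffices key : ∀ z, TransGen r (f a) z → ∀ b, z = f b →
      TransGen (fun x y => r (f x) (f y)) a b from key _ h b rfl
  intro z hz
  induction hz with
  | single hr => rintro b rfl; exact .single hr
  | tail _ hcz ih =>
    rintro b rfl
    obtain ⟨c, rfl⟩ := hr _ _ hcz
    exact (ih c rfl).tail hcz

/-- Hiding commutes with gluing. -/
theorem transGen_or_iff_of_injective {f : α → β} (hf : Injective f) {D : Set α}
    {r s : α → α → Prop} {r' s' : β → β → Prop}
    (hr : ∀ x y, r x y ↔ x ∈ D ∧ y ∈ D ∧ TransGen r' (f x) (f y))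
    (hs : ∀ x y, s x y ↔ s' (f x) (f y)) (hs' : ∀ c d, s' c d → c ∈ f '' D ∧ d ∈ f '' D)
    {a b : α} (ha : a ∈ D) (hb : b ∈ D) :
    TransGen (fun x y => r x y ∨ s x y) a b ↔
      TransGen (fun c d => r' c d ∨ s' c d) (f a) (f b) := by
  constructor
  · refine TransGen.lift' f (fun x y hxy => ?_) _ _
    rcases hxy with hxy | hxy
    · exact TransGen.mono (fun _ _ => Or.inl) _ _ ((hr x y).1 hxy).2.2
    · exact .single (Or.inr ((hs x y).1 hxy))
  · intro h
    have hcut := h.or_restrict hs' (mem_image_of_mem f ha) (mem_image_of_mem f hb)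
    refine TransGen.mono (fun x y hxy => ?_) _ _ (hcut.comap_of_mem_range ?_)
    · rcases hxy with ⟨hx, hy, hxy⟩ | hxy
      · exact Or.inl ((hr x y).2 ⟨hf.mem_set_image.1 hx, hf.mem_set_image.1 hy, hxy⟩)
      · exact Or.inr ((hs x y).2 hxy)
    · rintro c d (⟨⟨x, -, rfl⟩, -⟩ | hcd)
      · exact mem_range_self x
      · exact image_subset_range f D (hs' c d hcd).1

end TransGen

theorem shiftRel_shiftRel (r : ℕ → ℕ → Prop) (m n : ℕ) :
    shiftRel (shiftRel r m) n = shiftRel r (n + m) := by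
  funext x y
  simp only [shiftRel, Nat.sub_sub]
  apply propext
  constructor
  · rintro ⟨hx, hy, hx', hy', h⟩
    exact ⟨by omega, by omega, h⟩
  · rintro ⟨hx, hy, h⟩
    exact ⟨by omega, by omega, by omega, by omega, h⟩

theorem shiftRel_or (r s : ℕ → ℕ → Prop) (n : ℕ) :
    shiftRel (fun a b => r a b ∨ s a b) n = fun a b => shiftRel r n a b ∨ shiftRel s n a b := by
  funext x y
  simp only [shiftRel, and_or_left]

theorem shiftRel_transGen (r : ℕ → ℕ → Prop) (n : ℕ) :
    shiftRel (TransGen r) n = TransGen (shiftRel r n) := by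
  funext x y
  apply propext
  constructor
  · rintro ⟨hx, hy, h⟩
    have := TransGen.lift (· + n) (p := shiftRel r n)
      (fun a b hab => ⟨Nat.le_add_left n a, Nat.le_add_left n b, by simpa using hab⟩) _ _ h
    simpa only [onFun, Nat.sub_add_cancel hx, Nat.sub_add_cancel hy] using this
  · intro h
    obtain ⟨hx, hy⟩ := h.and_of_forall (p := (n ≤ ·)) fun a b hab => ⟨hab.1, hab.2.1⟩
    exact ⟨hx, hy, TransGen.lift (· - n) (fun a b hab => hab.2.2) _ _ h⟩

theorem shiftRel_glueRel (R₂ R₃ : ℕ → ℕ → Prop) (m n : ℕ) :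
    shiftRel (glueRel m R₂ R₃) n =
      TransGen (fun a b => shiftRel R₂ n a b ∨ shiftRel R₃ (n + m) a b) := by
  rw [glueRel, shiftRel_transGen, shiftRel_or, shiftRel_shiftRel]

section EmbOuter

variable {n m k : ℕ}

theorem embOuter_injective (n m : ℕ) : Injective (embOuter n m) := by
  intro x y
  simp only [embOuter]
  split_ifs <;> omega

theorem embOuter_embOuter (x : ℕ) : embOuter n m (embOuter n k x) = embOuter n (m + k) x := by
  simp only [embOuter]
  split_ifs <;> omega

theorem embOuter_add_embOuter (x : ℕ) :
    embOuter (n + m) k (embOuter n m x) = embOuter n (m + k) x := by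
  simp only [embOuter]
  split_ifs <;> omega

theorem embOuter_of_lt {x : ℕ} (hx : x < n) : embOuter n m x = x := if_pos hx

theorem embOuter_lt_iff {x : ℕ} : embOuter n m x < n ↔ x < n := by
  simp only [embOuter]
  split_ifs <;> omega

theorem le_embOuter_add_iff {x : ℕ} : n ≤ embOuter (n + m) k x ↔ n ≤ x := by
  simp only [embOuter]
  split_ifs <;> omega

theorem embOuter_lt_add_iff {x : ℕ} : embOuter n m x < n + m + k ↔ x < n + k := by
  simp only [embOuter]
  split_ifs <;> omega

theorem shiftRel_add_embOuter (r : ℕ → ℕ → Prop) (x y : ℕ) :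
    shiftRel r (n + m) (embOuter n m x) (embOuter n m y) ↔ shiftRel r n x y := by
  unfold shiftRel embOuter
  split_ifs <;> constructor <;> rintro ⟨hx, hy, h⟩ <;>
    first | omega | exact ⟨by omega, by omega, by simpa only [Nat.add_sub_add_right] using h⟩

theorem embOuter_add_sub {x : ℕ} (hx : n ≤ x) :
    embOuter (n + m) k x - n = embOuter m k (x - n) := by
  simp only [embOuter]
  split_ifs <;> omega

end EmbOuter

section Gen

variable {n m k l : ℕ} {R₁ R₂ R₃ : ℕ → ℕ → Prop}

def glueRel₃ (n m : ℕ) (R₁ R₂ R₃ : ℕ → ℕ → Prop) : ℕ → ℕ → Prop :=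
  TransGen (fun a b => R₁ a b ∨ shiftRel R₂ n a b ∨ shiftRel R₃ (n + m) a b)

theorem glueRel_lt (h₁ : ∀ x y, R₁ x y → x < n + m ∧ y < n + m)
    (h₂ : ∀ x y, R₂ x y → x < m + k ∧ y < m + k) {a b : ℕ} (h : glueRel n R₁ R₂ a b) :
    a < n + m + k ∧ b < n + m + k := by
  refine h.and_of_forall (p := (· < n + m + k)) fun x y hxy => ?_
  rcases hxy with hxy | ⟨hx, hy, hxy⟩
  · have := h₁ x y hxy; omega
  · have := h₂ _ _ hxy; omega

theorem genComp_iff_glueRel (h₁ : ∀ x y, R₁ x y → x < n + m ∧ y < n + m)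
    (h₂ : ∀ x y, R₂ x y → x < m + k ∧ y < m + k) (x y : ℕ) :
    genComp n m k R₂ R₁ x y ↔ glueRel n R₁ R₂ (embOuter n m x) (embOuter n m y) := by
  refine ⟨fun h => h.2.2, fun h => ?_⟩
  obtain ⟨hx, hy⟩ := glueRel_lt h₁ h₂ h
  exact ⟨embOuter_lt_add_iff.1 hx, embOuter_lt_add_iff.1 hy, h⟩

theorem shiftRel_genComp (x y : ℕ) :
    shiftRel (genComp m k l R₃ R₂) n x y ↔ x < n + m + l ∧ y < n + m + l ∧
      shiftRel (glueRel m R₂ R₃) n (embOuter (n + m) k x) (embOuter (n + m) k y) := by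
  simp only [shiftRel, genComp, le_embOuter_add_iff]
  constructor
  · rintro ⟨hx, hy, hx', hy', h⟩
    refine ⟨by omega, by omega, hx, hy, ?_⟩
    rwa [embOuter_add_sub hx, embOuter_add_sub hy]
  · rintro ⟨hx', hy', hx, hy, h⟩
    refine ⟨hx, hy, by omega, by omega, ?_⟩
    rwa [embOuter_add_sub hx, embOuter_add_sub hy] at h

theorem genComp_genComp_left (h₁ : ∀ x y, R₁ x y → x < n + m ∧ y < n + m)
    (h₂ : ∀ x y, R₂ x y → x < m + k ∧ y < m + k) (x y : ℕ) :
    genComp n k l R₃ (genComp n m k R₂ R₁) x y ↔ x < n + l ∧ y < n + l ∧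
      glueRel₃ n m R₁ R₂ R₃ (embOuter n (m + k) x) (embOuter n (m + k) y) := by
  refine and_congr_right fun _ => and_congr_right fun _ => ?_
  rw [← embOuter_embOuter, ← embOuter_embOuter, glueRel]
  refine (transGen_or_iff_of_injective (embOuter_injective n m) (D := univ)
    (r' := fun a b => R₁ a b ∨ shiftRel R₂ n a b) (s' := shiftRel R₃ (n + m))
    ?_ ?_ ?_ (mem_univ _) (mem_univ _)).trans ?_
  · intro x y
    simp only [mem_univ, true_and]
    exact genComp_iff_glueRel h₁ h₂ x y
  · exact fun x y => (shiftRel_add_embOuter R₃ x y).symm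
  · simp only [image_univ]
    rintro c d ⟨hc, hd, -⟩
    exact ⟨⟨c - m, by simp only [embOuter]; split_ifs <;> omega⟩,
      ⟨d - m, by simp only [embOuter]; split_ifs <;> omega⟩⟩
  · simp only [glueRel₃, or_assoc]

theorem genComp_genComp_right (h₁ : ∀ x y, R₁ x y → x < n + m ∧ y < n + m) (x y : ℕ) :
    genComp n m l (genComp m k l R₃ R₂) R₁ x y ↔ x < n + l ∧ y < n + l ∧
      glueRel₃ n m R₁ R₂ R₃ (embOuter n (m + k) x) (embOuter n (m + k) y) := by
  refine and_congr_right fun hx => and_congr_right fun hy => ?_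
  simp only [glueRel, or_comm (a := R₁ _ _)]
  rw [← embOuter_add_embOuter, ← embOuter_add_embOuter]
  refine (transGen_or_iff_of_injective (embOuter_injective (n + m) k)
    (D := {x | x < n + m + l}) (r' := fun a b => shiftRel R₂ n a b ∨ shiftRel R₃ (n + m) a b)
    (s' := R₁) ?_ ?_ ?_ (embOuter_lt_add_iff.2 hx) (embOuter_lt_add_iff.2 hy)).trans ?_
  · intro x y
    rw [shiftRel_genComp, shiftRel_glueRel]
    rfl
  · intro x y
    constructor
    · intro h
      obtain ⟨hx, hy⟩ := h₁ x y h
      rwa [embOuter_of_lt hx, embOuter_of_lt hy]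
    · intro h
      obtain ⟨hx, hy⟩ := h₁ _ _ h
      rwa [embOuter_of_lt (embOuter_lt_iff.1 hx), embOuter_of_lt (embOuter_lt_iff.1 hy)] at h
  · intro c d h
    obtain ⟨hc, hd⟩ := h₁ c d h
    exact ⟨⟨c, by show _ < n + m + l; omega, embOuter_of_lt hc⟩,
      ⟨d, by show _ < n + m + l; omega, embOuter_of_lt hd⟩⟩
  · simp only [glueRel₃, or_comm (a := R₁ _ _)]

end Gen

theorem genComp_assoc_general (n m k l : ℕ) (R₁ R₂ R₃ : ℕ → ℕ → Prop)
    (h₁ : IsEquivOn R₁ (n + m)) (h₂ : IsEquivOn R₂ (m + k)) :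
    genComp n k l R₃ (genComp n m k R₂ R₁) =
      genComp n m l (genComp m k l R₃ R₂) R₁ := by
  funext x y
  exact propext ((genComp_genComp_left h₁.1 h₂.1 x y).trans
    (genComp_genComp_right h₁.1 x y).symm)

/-- Composition in Gen is associative. -/
theorem genComp_assoc (n m k l : ℕ) (R₁ R₂ R₃ : ℕ → ℕ → Prop)
    (h₁ : IsEquivOn R₁ (n + m)) (h₂ : IsEquivOn R₂ (m + k))
    (h₃ : IsEquivOn R₃ (k + l)) :
    genComp n k l R₃ (genComp n m k R₂ R₁) =
      genComp n m l (genComp m k l R₃ R₂) R₁ :=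
  genComp_assoc_general n m k l R₁ R₂ R₃ h₁ h₂
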